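/- arXiv:2507.09696 — 4 statements merged into one kernel-verified Lean document; each statement's English description precedes it below -/
import Mathlib

section
/- Let e_1,...,e_{n+1} : I → ℝ^{n+1} be a smooth orthonormal frame (Frenet frame) satisfying the Frenet formulas e_1'(s) = κ_1(s)e_2(s), e_i'(s) = -κ_{i-1}(s)e_{i-1}(s) + κ_i(s)e_{i+1}(s) for 2 ≤ i ≤ n, and e_{n+1}'(s) = -κ_n(s)e_n(s). Then for 1 ≤ i < k ≤ n+1 and small Δ, ⟨e_i(s+Δ), e_k(s)⟩ = (Δ^{k-i}/(k-i)!)·κ_i(s)···κ_{k-1}(s) + O(|Δ|^{k-i+1}). -/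
open Set

theorem my_idw {f : ℝ → ℝ} (hf : ContDiff ℝ (⊤ : ℕ∞) f) {s : Set ℝ} (hs : UniqueDiffOn ℝ s)
    {x : ℝ} (hx : x ∈ s) (m : ℕ) :
    iteratedDerivWithin m f s x = iteratedDeriv m f x := by
  rw [iteratedDerivWithin_eq_iteratedFDerivWithin, iteratedDeriv_eq_iteratedFDeriv]
  have hf' : ContDiff ℝ (⊤ : ℕ∞) f := hf.of_le (by simp)
  have h : HasFTaylorSeriesUpTo (⊤ : ℕ∞) f (ftaylorSeries ℝ f) :=
    contDiff_iff_ftaylorSeries.mp hf'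
  have h' : HasFTaylorSeriesUpToOn (⊤ : ℕ∞) f (ftaylorSeries ℝ f) s :=
    (hasFTaylorSeriesUpToOn_univ_iff.mpr h).mono (subset_univ s)
  exact congrFun (congrArg _
    (h'.eq_iteratedFDerivWithin_of_uniqueDiffOn (by exact_mod_cast le_top) hs hx).symm) _

theorem my_taylor_right {f : ℝ → ℝ} (hf : ContDiff ℝ (⊤ : ℕ∞) f) {C : ℝ} (N : ℕ) {x y : ℝ}
    (hxy : x ≤ y) (hC : ∀ t ∈ Set.Icc x y, |iteratedDeriv (N + 1) f t| ≤ C) :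
    |f y - ∑ m ∈ Finset.range (N + 1), iteratedDeriv m f x * (y - x) ^ m / m.factorial|
      ≤ C * |y - x| ^ (N + 1) := by
  have hC0 : 0 ≤ C := le_trans (abs_nonneg _) (hC x (left_mem_Icc.mpr hxy))
  rcases eq_or_lt_of_le hxy with rfl | hlt
  · have hsum : ∑ m ∈ Finset.range (N + 1), iteratedDeriv m f x * (x - x) ^ m / m.factorial
        = f x := by
      rw [Finset.sum_eq_single_of_mem 0 (by simp)]
      · simp
      · intro b _ hb
        simp [sub_self, zero_pow hb]
    rw [hsum]
    simp
  · have hu : UniqueDiffOn ℝ (Set.Icc x y) := uniqueDiffOn_Icc hlt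
    have hf' : ContDiffOn ℝ (N + 1) f (Set.Icc x y) := (hf.of_le (by exact_mod_cast le_top)).contDiffOn
    have hb := taylor_mean_remainder_bound (f := f) (le_of_lt hlt) hf'
      (right_mem_Icc.mpr hxy)
      (fun t ht => by rw [my_idw hf hu ht]; simpa using hC t ht)
    have hsum : taylorWithinEval f N (Set.Icc x y) x y
        = ∑ m ∈ Finset.range (N + 1), iteratedDeriv m f x * (y - x) ^ m / m.factorial := by
      rw [taylor_within_apply]
      refine Finset.sum_congr rfl fun m _ => ?_
      rw [my_idw hf hu (left_mem_Icc.mpr hxy)]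
      simp [smul_eq_mul]
      ring
    rw [Real.norm_eq_abs, hsum] at hb
    refine hb.trans ?_
    rw [abs_of_nonneg (by linarith : (0:ℝ) ≤ y - x)]
    apply div_le_self (mul_nonneg hC0 (pow_nonneg (by linarith) _))
    exact_mod_cast Nat.one_le_iff_ne_zero.mpr N.factorial_ne_zero

theorem my_taylor_two {f : ℝ → ℝ} (hf : ContDiff ℝ (⊤ : ℕ∞) f) {C a b : ℝ} (N : ℕ)
    (hC : ∀ t ∈ Set.Icc a b, |iteratedDeriv (N + 1) f t| ≤ C) :
    ∀ x ∈ Set.Icc a b, ∀ y ∈ Set.Icc a b,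
      |f y - ∑ m ∈ Finset.range (N + 1), iteratedDeriv m f x * (y - x) ^ m / m.factorial|
        ≤ C * |y - x| ^ (N + 1) := by
  intro x hx y hy
  rcases le_total x y with h | h
  · exact my_taylor_right hf N h (fun t ht => hC t ⟨hx.1.trans ht.1, ht.2.trans hy.2⟩)
  · have hg : ContDiff ℝ (⊤ : ℕ∞) (fun t => f (-t)) := hf.comp contDiff_neg
    have key := my_taylor_right (C := C) hg N (neg_le_neg h) (x := -x) (y := -y)
      (fun t ht => by
        rw [iteratedDeriv_comp_neg]
        have h1 : -t ∈ Set.Icc a b := by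
          constructor
          · have := ht.2; have := hy.1; simp at this ⊢; linarith [ht.2, hy.1]
          · have := ht.1; linarith [hx.2]
        calc |(-1 : ℝ) ^ (N + 1) • iteratedDeriv (N + 1) f (-t)|
            = |iteratedDeriv (N + 1) f (-t)| := by
              rw [smul_eq_mul, abs_mul, abs_pow, abs_neg, abs_one, one_pow, one_mul]
          _ ≤ C := hC _ h1)
    have e1 : ∀ m : ℕ, iteratedDeriv m (fun t => f (-t)) (-x) * (-y - -x) ^ m / m.factorial
        = iteratedDeriv m f x * (y - x) ^ m / m.factorial := by
      intro m
      rw [iteratedDeriv_comp_neg, neg_neg, smul_eq_mul]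
      have h2 : ((-1 : ℝ)) ^ m * ((-1 : ℝ)) ^ m = 1 := by
        rw [← mul_pow]; norm_num
      have h3 : (-y - -x : ℝ) = (-1) * (y - x) := by ring
      rw [h3, mul_pow]
      field_simp
      linear_combination (iteratedDeriv m f x * (y - x) ^ m) * h2
    rw [neg_neg, Finset.sum_congr rfl (fun m _ => e1 m)] at key
    have h4 : |(-y) - (-x)| = |y - x| := by rw [abs_sub_comm]; congr 1; ring
    rwa [h4] at key
theorem my_inner_iter {E : Type*} [NormedAddCommGroup E] [InnerProductSpace ℝ E]
    {u : ℝ → E} (hu : ContDiff ℝ (⊤ : ℕ∞) u) (v : E) (m : ℕ) (t : ℝ) :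
    iteratedDeriv m (fun t => (inner ℝ (u t) v : ℝ)) t = inner ℝ (iteratedDeriv m u t) v := by
  induction m generalizing t with
  | zero => simp
  | succ m ih =>
    rw [iteratedDeriv_succ, iteratedDeriv_succ]
    have hdiff : Differentiable ℝ (iteratedDeriv m u) :=
      hu.differentiable_iteratedDeriv m (by exact_mod_cast ENat.coe_lt_top m)
    rw [show iteratedDeriv m (fun t => (inner ℝ (u t) v : ℝ))
        = fun t => (inner ℝ (iteratedDeriv m u t) v : ℝ) from funext ih]
    have h := (hdiff t).hasDerivAt.inner ℝ (hasDerivAt_const t v)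
    rw [h.deriv]
    simp

/-- Frenet–Taylor expansion: for a smooth orthonormal Frenet frame `e_1, …, e_{n+1}`
satisfying the Frenet formulas with curvatures `κ_j = ⟨e_j', e_{j+1}⟩`, and indices
`1 ≤ i < k ≤ n+1`, one has
`⟨e_i(s+Δ), e_k(s)⟩ = (Δ^{k-i}/(k-i)!) κ_i(s)⋯κ_{k-1}(s) + O(|Δ|^{k-i+1})`
uniformly for `s, s+Δ` in the compact interval `[a,b]`. -/
theorem stmt_0 (n : ℕ) (hn : 1 ≤ n) (a b : ℝ) (hab : a ≤ b)
    (e : ℕ → ℝ → EuclideanSpace ℝ (Fin (n + 1)))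
    (κ : ℕ → ℝ → ℝ)
    (hsmooth : ∀ i ∈ Finset.Icc 1 (n + 1), ContDiff ℝ (⊤ : ℕ∞) (e i))
    (horth : ∀ s : ℝ, ∀ i ∈ Finset.Icc 1 (n + 1), ∀ j ∈ Finset.Icc 1 (n + 1),
      (inner ℝ (e i s) (e j s) : ℝ) = if i = j then 1 else 0)
    (hκ : ∀ (j : ℕ) (s : ℝ), κ j s = (inner ℝ (deriv (e j) s) (e (j + 1) s) : ℝ))
    (hfr1 : ∀ s : ℝ, deriv (e 1) s = κ 1 s • e 2 s)
    (hfri : ∀ i ∈ Finset.Icc 2 n, ∀ s : ℝ,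
      deriv (e i) s = -(κ (i - 1) s) • e (i - 1) s + κ i s • e (i + 1) s)
    (hfrlast : ∀ s : ℝ, deriv (e (n + 1)) s = -(κ n s) • e n s)
    (i k : ℕ) (hi : 1 ≤ i) (hik : i < k) (hk : k ≤ n + 1) :
    ∃ C : ℝ, 0 < C ∧ ∀ s Δ : ℝ, s ∈ Set.Icc a b → s + Δ ∈ Set.Icc a b →
      |(inner ℝ (e i (s + Δ)) (e k s) : ℝ)
          - Δ ^ (k - i) / (Nat.factorial (k - i) : ℝ) * ∏ j ∈ Finset.Ico i k, κ j s|
        ≤ C * |Δ| ^ (k - i + 1) := by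
  have himem : i ∈ Finset.Icc 1 (n + 1) := Finset.mem_Icc.mpr ⟨hi, by omega⟩
  have hkmem : k ∈ Finset.Icc 1 (n + 1) := Finset.mem_Icc.mpr ⟨by omega, hk⟩
  have hEi : ContDiff ℝ (⊤ : ℕ∞) (e i) := hsmooth i himem
  -- Structural lemma: inner products of iterated derivatives of `e i` with frame vectors
  have key : ∀ m : ℕ, ∀ k', 1 ≤ k' → k' ≤ n + 1 → i + m ≤ k' → ∀ t : ℝ,
      (inner ℝ (iteratedDeriv m (e i) t) (e k' t) : ℝ)
        = if k' = i + m then ∏ j ∈ Finset.Ico i k', κ j t else 0 := by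
    intro m
    induction m with
    | zero =>
      intro k' h1 h2 h3 t
      rw [iteratedDeriv_zero, horth t i himem k' (Finset.mem_Icc.mpr ⟨h1, h2⟩)]
      by_cases h : k' = i + 0
      · rw [if_pos (by omega), if_pos h]
        have : Finset.Ico i k' = ∅ := by rw [Finset.Ico_eq_empty_iff]; omega
        simp [this]
      · rw [if_neg (by omega), if_neg h]
    | succ m ih =>
      intro k' h1 h2 h3 t
      have hdm : Differentiable ℝ (iteratedDeriv m (e i)) :=
        hEi.differentiable_iteratedDeriv m (by exact_mod_cast ENat.coe_lt_top m)
      have hk'mem : k' ∈ Finset.Icc 1 (n + 1) := Finset.mem_Icc.mpr ⟨h1, h2⟩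
      have hdk : Differentiable ℝ (e k') := (hsmooth k' hk'mem).differentiable (by simp)
      have hzero : (fun t => (inner ℝ (iteratedDeriv m (e i) t) (e k' t) : ℝ))
          = fun _ => (0 : ℝ) := by
        funext t
        rw [ih k' h1 h2 (by omega) t, if_neg (by omega)]
      have hDA := (hdm t).hasDerivAt.inner ℝ (hdk t).hasDerivAt
      rw [hzero] at hDA
      have hval := hDA.unique (hasDerivAt_const t (0 : ℝ))
      -- hval : ⟪e_i^{(m)} t, (e k')' t⟫ + ⟪(e_i^{(m)})' t, e k' t⟫ = 0
      rw [iteratedDeriv_succ]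
      have hgoal : (inner ℝ (deriv (iteratedDeriv m (e i)) t) (e k' t) : ℝ)
          = -(inner ℝ (iteratedDeriv m (e i) t) (deriv (e k') t) : ℝ) := by linarith
      rw [hgoal]
      obtain ⟨c, rfl⟩ : ∃ c, k' = c + 1 := ⟨k' - 1, by omega⟩
      have hic : i ≤ c := by omega
      rcases eq_or_lt_of_le h2 with hcn | hcn
      · -- c + 1 = n + 1, use hfrlast
        have hcn' : c = n := by omega
        have hfr : deriv (e (c + 1)) t = -(κ c t) • e c t := by
          rw [hcn']; exact hfrlast t
        rw [hfr, real_inner_smul_right,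
          ih c (by omega) (by omega) (by omega) t]
        by_cases hc : c = i + m
        · rw [if_pos hc, if_pos (show c + 1 = i + (m + 1) by omega),
            Finset.prod_Ico_succ_top hic]
          ring
        · rw [if_neg hc, if_neg (show ¬(c + 1 = i + (m + 1)) by omega)]
          ring
      · -- c + 1 ≤ n, use hfri
        have hmem2 : c + 1 ∈ Finset.Icc 2 n := Finset.mem_Icc.mpr ⟨by omega, by omega⟩
        rw [hfri (c + 1) hmem2 t]
        simp only [Nat.add_sub_cancel]
        rw [inner_add_right, real_inner_smul_right, real_inner_smul_right,
          ih c (by omega) (by omega) (by omega) t,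
          ih (c + 2) (by omega) (by omega) (by omega) t,
          if_neg (show ¬(c + 2 = i + m) by omega)]
        by_cases hc : c = i + m
        · rw [if_pos hc, if_pos (show c + 1 = i + (m + 1) by omega),
            Finset.prod_Ico_succ_top hic]
          ring
        · rw [if_neg hc, if_neg (show ¬(c + 1 = i + (m + 1)) by omega)]
          ring
  -- Main argument
  set M := k - i with hM
  have hMk : i + M = k := by omega
  obtain ⟨C₀, hC₀⟩ := (isCompact_Icc (a := a) (b := b)).exists_bound_of_continuousOn
    (f := fun t => iteratedDeriv (M + 1) (e i) t)
    (hEi.continuous_iteratedDeriv (M + 1) (by exact_mod_cast le_top)).continuousOn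
  refine ⟨max C₀ 0 + 1, by positivity, ?_⟩
  intro s Δ hs hsΔ
  have hek_norm : ‖e k s‖ = 1 := by
    have h1 := horth s k hkmem k hkmem
    rw [if_pos rfl] at h1
    have h2 : ‖e k s‖ ^ 2 = 1 := by
      rw [← real_inner_self_eq_norm_sq]; exact h1
    nlinarith [norm_nonneg (e k s)]
  set F : ℝ → ℝ := fun t => (inner ℝ (e i t) (e k s) : ℝ) with hF
  have hFsmooth : ContDiff ℝ (⊤ : ℕ∞) F := hEi.inner ℝ contDiff_const
  have hFd : ∀ (m : ℕ) (t : ℝ),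
      iteratedDeriv m F t = (inner ℝ (iteratedDeriv m (e i) t) (e k s) : ℝ) :=
    fun m t => my_inner_iter hEi (e k s) m t
  have hCb : ∀ t ∈ Set.Icc a b, |iteratedDeriv (M + 1) F t| ≤ max C₀ 0 + 1 := by
    intro t ht
    rw [hFd]
    calc |(inner ℝ (iteratedDeriv (M + 1) (e i) t) (e k s) : ℝ)|
        ≤ ‖iteratedDeriv (M + 1) (e i) t‖ * ‖e k s‖ := abs_real_inner_le_norm _ _
      _ = ‖iteratedDeriv (M + 1) (e i) t‖ := by rw [hek_norm, mul_one]
      _ ≤ C₀ := hC₀ t ht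
      _ ≤ max C₀ 0 + 1 := by
          have := le_max_left C₀ (0 : ℝ); linarith
  have htb := my_taylor_two hFsmooth M hCb s hs (s + Δ) hsΔ
  have hsum : ∑ m ∈ Finset.range (M + 1), iteratedDeriv m F s * ((s + Δ) - s) ^ m / m.factorial
      = Δ ^ (k - i) / (Nat.factorial (k - i) : ℝ) * ∏ j ∈ Finset.Ico i k, κ j s := by
    rw [Finset.sum_eq_single M]
    · rw [hFd M s, key M k (by omega) hk (by omega) s, if_pos (by omega)]
      have : (s + Δ) - s = Δ := by ring
      rw [this, ← hM]
      ring
    · intro m hm hmM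
      have hm' : m ≤ M := by (have := Finset.mem_range.mp hm); omega
      rw [hFd m s, key m k (by omega) hk (by omega) s, if_neg (by omega)]
      ring
    · intro hM'
      exact absurd (Finset.self_mem_range_succ M) hM'
  rw [hsum] at htb
  have habs : |(s + Δ) - s| = |Δ| := by congr 1; ring
  rw [habs] at htb
  exact htb
end

section
/- Let δ_1,…,δ_{n-1} ∈ (0,1] with δ_1^n δ_2^{n-1} ⋯ δ_{n-1}^2 = R^{-1}, let δ := δ_1⋯δ_{n-1}, and for 1 ≤ k ≤ n-2 define σ_k := (ρ_n/ρ_{k-1})^{1/(n+1-k)} where ρ_0 = 1, ρ_j = δ_1^j δ_2^{j-1}⋯δ_j, ρ_n = R^{-1}. Then σ_{n-1} = σ_n = δ and δ ≤ σ_{n-2} ≤ σ_{n-3} ≤ ⋯ ≤ σ_1 ≤ 1. -/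
/-!
Write `p_j = δ_1 ⋯ δ_j`, with `δ_i = 1` for `i ≥ n`, so that `p_{n-1} = p_n = δ`. Then
`ρ_m = p_1 ⋯ p_m` for every `m ≤ n`, hence `ρ_n / ρ_{k-1} = p_k ⋯ p_n` and `σ_k` is the geometric
mean of `p_k, …, p_n`. Since `p` is antitone with values in `(0, 1]`, these tail means decrease in
`k` and lie between `p_n = δ` and `p_k ≤ 1`.
-/

open Finset

theorem prod_Icc_pow_eq_prod_prod_Icc {M : Type*} [CommMonoid M] (f : ℕ → M) (m : ℕ) :
    ∏ i ∈ Icc 1 m, f i ^ (m + 1 - i) = ∏ j ∈ Icc 1 m, ∏ i ∈ Icc 1 j, f i := by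
  induction m with
  | zero => simp
  | succ m ih =>
    have hpow : ∏ i ∈ Icc 1 m, f i ^ (m + 1 + 1 - i)
        = (∏ i ∈ Icc 1 m, f i ^ (m + 1 - i)) * ∏ i ∈ Icc 1 m, f i := by
      rw [← prod_mul_distrib]
      refine prod_congr rfl fun i hi => ?_
      rw [← pow_succ, show m + 1 + 1 - i = m + 1 - i + 1 by grind]
    rw [prod_Icc_succ_top (by omega), prod_Icc_succ_top (by omega), hpow, ih,
      prod_Icc_succ_top (by omega), Nat.add_sub_cancel_left, pow_one, mul_assoc]

theorem prod_Icc_one_div_prod_Icc_one {G : Type*} [CommGroupWithZero G] {f : ℕ → G} {m n : ℕ}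
    (hmn : m ≤ n) (hf : ∏ j ∈ Icc 1 m, f j ≠ 0) :
    (∏ j ∈ Icc 1 n, f j) / ∏ j ∈ Icc 1 m, f j = ∏ j ∈ Icc (m + 1) n, f j := by
  rw [div_eq_iff hf, mul_comm, Icc_add_one_left_eq_Ioc, ← zero_add 1, Icc_add_one_left_eq_Ioc,
    Icc_add_one_left_eq_Ioc, prod_Ioc_consecutive f (Nat.zero_le m) hmn]

theorem antitone_prod_Icc_one {d : ℕ → ℝ} (hd₀ : ∀ i, 0 ≤ d i) (hd₁ : ∀ i, d i ≤ 1) :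
    Antitone fun j => ∏ i ∈ Icc 1 j, d i :=
  antitone_nat_of_succ_le fun j => by
    rw [prod_Icc_succ_top (by omega)]
    exact mul_le_of_le_one_right (prod_nonneg fun i _ => hd₀ i) (hd₁ _)

theorem eq_prod_Icc_prod_Icc_mulIndicator {n m : ℕ} {δ ρ : ℕ → ℝ} (hρ0 : ρ 0 = 1)
    (hρ : ∀ k ∈ Icc 1 (n - 1), ρ k = ∏ i ∈ Icc 1 k, δ i ^ (k + 1 - i))
    (hρn : ρ n = ∏ i ∈ Icc 1 (n - 1), δ i ^ (n + 1 - i)) (hm : m ≤ n) :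
    ρ m = ∏ j ∈ Icc 1 m, ∏ i ∈ Icc 1 j, (Icc 1 (n - 1) : Set ℕ).mulIndicator δ i := by
  obtain rfl | hm₀ := Nat.eq_zero_or_pos m
  · simp [hρ0]
  rw [← prod_Icc_pow_eq_prod_prod_Icc]
  obtain hmn | rfl := hm.lt_or_eq
  · rw [hρ m (mem_Icc.2 ⟨hm₀, by omega⟩)]
    exact prod_congr rfl fun i hi => by
      rw [Set.mulIndicator_of_mem (mem_coe.2 (Icc_subset_Icc_right (by omega) hi))]
  · rw [hρn, prod_mulIndicator_subset_of_eq_one δ (fun i x => x ^ (m + 1 - i))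
      (Icc_subset_Icc_right (Nat.sub_le m 1)) fun _ => one_pow _]

noncomputable def geomMeanIcc (f : ℕ → ℝ) (k n : ℕ) : ℝ :=
  (∏ j ∈ Icc k n, f j) ^ ((1 : ℝ) / ((n : ℝ) + 1 - (k : ℝ)))

section geomMeanIcc

variable {f : ℕ → ℝ} {k n : ℕ}

theorem geomMeanIcc_nonneg (hf : ∀ j, 0 ≤ f j) : 0 ≤ geomMeanIcc f k n :=
  Real.rpow_nonneg (prod_nonneg fun j _ => hf j) _

theorem geomMeanIcc_pow (hf : ∀ j, 0 ≤ f j) (hkn : k ≤ n) :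
    geomMeanIcc f k n ^ (n + 1 - k) = ∏ j ∈ Icc k n, f j := by
  have hcast : (n : ℝ) + 1 - k = ((n + 1 - k : ℕ) : ℝ) := by
    push_cast [Nat.cast_sub (by omega : k ≤ n + 1)]
    ring
  rw [geomMeanIcc, hcast, one_div,
    Real.rpow_inv_natCast_pow (prod_nonneg fun j _ => hf j) (by omega)]

theorem le_geomMeanIcc (hf : ∀ j, 0 ≤ f j) (hanti : Antitone f) (hkn : k ≤ n) :
    f n ≤ geomMeanIcc f k n := by
  refine le_of_pow_le_pow_left₀ (n := n + 1 - k) (by omega) (geomMeanIcc_nonneg hf) ?_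
  calc f n ^ (n + 1 - k) = ∏ _j ∈ Icc k n, f n := by rw [prod_const, Nat.card_Icc]
    _ ≤ ∏ j ∈ Icc k n, f j := prod_le_prod (fun _ _ => hf n) fun j hj => hanti (mem_Icc.1 hj).2
    _ = geomMeanIcc f k n ^ (n + 1 - k) := (geomMeanIcc_pow hf hkn).symm

theorem geomMeanIcc_le (hf : ∀ j, 0 ≤ f j) (hanti : Antitone f) (hkn : k ≤ n) :
    geomMeanIcc f k n ≤ f k := by
  refine le_of_pow_le_pow_left₀ (n := n + 1 - k) (by omega) (hf k) ?_
  calc geomMeanIcc f k n ^ (n + 1 - k) = ∏ j ∈ Icc k n, f j := geomMeanIcc_pow hf hkn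
    _ ≤ ∏ _j ∈ Icc k n, f k := prod_le_prod (fun j _ => hf j) fun j hj => hanti (mem_Icc.1 hj).1
    _ = f k ^ (n + 1 - k) := by rw [prod_const, Nat.card_Icc]

theorem geomMeanIcc_succ_le (hf : ∀ j, 0 ≤ f j) (hanti : Antitone f) (hkn : k < n) :
    geomMeanIcc f (k + 1) n ≤ geomMeanIcc f k n := by
  set g := geomMeanIcc f (k + 1) n
  have hg : g ≤ f k := (geomMeanIcc_le hf hanti hkn).trans (hanti k.le_succ)
  refine le_of_pow_le_pow_left₀ (n := n + 1 - k) (by omega) (geomMeanIcc_nonneg hf) ?_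
  calc g ^ (n + 1 - k) = g * g ^ (n + 1 - (k + 1)) := by
        rw [← pow_succ', show n + 1 - (k + 1) + 1 = n + 1 - k by omega]
    _ ≤ f k * g ^ (n + 1 - (k + 1)) :=
        mul_le_mul_of_nonneg_right hg (pow_nonneg (geomMeanIcc_nonneg hf) _)
    _ = geomMeanIcc f k n ^ (n + 1 - k) := by
        rw [geomMeanIcc_pow hf (show k + 1 ≤ n from hkn), geomMeanIcc_pow hf hkn.le,
          Icc_eq_cons_Ioc hkn.le, prod_cons, Icc_add_one_left_eq_Ioc]

theorem geomMeanIcc_eq_of_eq (hf : ∀ j, 0 ≤ f j) (hanti : Antitone f) (hkn : k ≤ n)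
    (hfkn : f k = f n) : geomMeanIcc f k n = f n :=
  (hfkn ▸ geomMeanIcc_le hf hanti hkn).antisymm (le_geomMeanIcc hf hanti hkn)

end geomMeanIcc

theorem stmt_3_general (n : ℕ) (hn : 3 ≤ n) (R : ℝ)
    (δ : ℕ → ℝ) (hδ : ∀ i ∈ Finset.Icc 1 (n - 1), 0 < δ i ∧ δ i ≤ 1)
    (hnorm : ∏ i ∈ Finset.Icc 1 (n - 1), δ i ^ (n + 1 - i) = R⁻¹)
    (ρ : ℕ → ℝ) (hρ0 : ρ 0 = 1)
    (hρ : ∀ k ∈ Finset.Icc 1 (n - 1), ρ k = ∏ i ∈ Finset.Icc 1 k, δ i ^ (k + 1 - i))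
    (hρn : ρ n = R⁻¹)
    (σ : ℕ → ℝ)
    (hσ : ∀ k : ℕ, 1 ≤ k → k ≤ n →
      σ k = (ρ n / ρ (k - 1)) ^ ((1 : ℝ) / ((n : ℝ) + 1 - (k : ℝ)))) :
    σ (n - 1) = ∏ i ∈ Finset.Icc 1 (n - 1), δ i
    ∧ σ n = ∏ i ∈ Finset.Icc 1 (n - 1), δ i
    ∧ (∏ i ∈ Finset.Icc 1 (n - 1), δ i) ≤ σ (n - 2)
    ∧ (∀ k : ℕ, 1 ≤ k → k ≤ n - 3 → σ (k + 1) ≤ σ k)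
    ∧ σ 1 ≤ 1 := by
  set d := (Icc 1 (n - 1) : Set ℕ).mulIndicator δ
  have hd : ∀ i, 0 < d i ∧ d i ≤ 1 := fun i => by
    by_cases hi : i ∈ Icc 1 (n - 1)
    · simpa only [d, Set.mulIndicator_of_mem (mem_coe.2 hi)] using hδ i hi
    · simp only [d, Set.mulIndicator_of_notMem (mt mem_coe.1 hi)]; exact ⟨one_pos, le_rfl⟩
  set p : ℕ → ℝ := fun j => ∏ i ∈ Icc 1 j, d i
  have hp_pos : ∀ j, 0 < p j := fun j => prod_pos fun i _ => (hd i).1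
  have hp : ∀ j, 0 ≤ p j := fun j => (hp_pos j).le
  have hp_anti : Antitone p := antitone_prod_Icc_one (fun i => (hd i).1.le) fun i => (hd i).2
  have hρp : ∀ m ≤ n, ρ m = ∏ j ∈ Icc 1 m, p j := fun _ hm =>
    eq_prod_Icc_prod_Icc_mulIndicator hρ0 hρ (hρn.trans hnorm.symm) hm
  have hσp : ∀ k, 1 ≤ k → k ≤ n → σ k = geomMeanIcc p k n := by
    intro k hk₁ hkn
    rw [hσ k hk₁ hkn, hρp n le_rfl, hρp (k - 1) (by omega),
      prod_Icc_one_div_prod_Icc_one (f := p) (by omega) (prod_pos fun j _ => hp_pos j).ne',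
      Nat.sub_add_cancel hk₁, geomMeanIcc]
  have hpn : p n = ∏ i ∈ Icc 1 (n - 1), δ i :=
    prod_mulIndicator_subset δ (Icc_subset_Icc_right (Nat.sub_le n 1))
  have hpn₁ : p (n - 1) = p n := (prod_mulIndicator_subset δ subset_rfl).trans hpn.symm
  refine ⟨?_, ?_, ?_, fun k hk₁ hk => ?_, ?_⟩
  · rw [hσp _ (by omega) (by omega), ← hpn, geomMeanIcc_eq_of_eq hp hp_anti (by omega) hpn₁]
  · rw [hσp _ (by omega) le_rfl, ← hpn, geomMeanIcc_eq_of_eq hp hp_anti le_rfl rfl]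
  · rw [hσp _ (by omega) (by omega), ← hpn]
    exact le_geomMeanIcc hp hp_anti (by omega)
  · rw [hσp _ (by omega) (by omega), hσp _ hk₁ (by omega)]
    exact geomMeanIcc_succ_le hp hp_anti (by omega)
  · rw [hσp _ le_rfl (by omega)]
    exact (geomMeanIcc_le hp hp_anti (by omega)).trans
      (prod_le_one (fun i _ => (hd i).1.le) fun i _ => (hd i).2)

/-- With `σ_k = (ρ_n/ρ_{k-1})^{1/(n+1-k)}`, one has `σ_{n-1} = σ_n = δ` and the chain
`δ ≤ σ_{n-2} ≤ σ_{n-3} ≤ ⋯ ≤ σ_1 ≤ 1`, where `δ = δ_1 ⋯ δ_{n-1}`. -/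
theorem stmt_3 (n : ℕ) (hn : 3 ≤ n) (R : ℝ) (hR : 1 ≤ R)
    (δ : ℕ → ℝ) (hδ : ∀ i ∈ Finset.Icc 1 (n - 1), 0 < δ i ∧ δ i ≤ 1)
    (hnorm : ∏ i ∈ Finset.Icc 1 (n - 1), δ i ^ (n + 1 - i) = R⁻¹)
    (ρ : ℕ → ℝ) (hρ0 : ρ 0 = 1)
    (hρ : ∀ k ∈ Finset.Icc 1 (n - 1), ρ k = ∏ i ∈ Finset.Icc 1 k, δ i ^ (k + 1 - i))
    (hρn : ρ n = R⁻¹)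
    (σ : ℕ → ℝ)
    (hσ : ∀ k : ℕ, 1 ≤ k → k ≤ n →
      σ k = (ρ n / ρ (k - 1)) ^ ((1 : ℝ) / ((n : ℝ) + 1 - (k : ℝ)))) :
    σ (n - 1) = ∏ i ∈ Finset.Icc 1 (n - 1), δ i
    ∧ σ n = ∏ i ∈ Finset.Icc 1 (n - 1), δ i
    ∧ (∏ i ∈ Finset.Icc 1 (n - 1), δ i) ≤ σ (n - 2)
    ∧ (∀ k : ℕ, 1 ≤ k → k ≤ n - 3 → σ (k + 1) ≤ σ k)
    ∧ σ 1 ≤ 1 :=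
  stmt_3_general n hn R δ hδ hnorm ρ hρ0 hρ hρn σ hσ
end

section
/- Fix n ≥ 2, R ≥ 1, and the exponent p = 4(n-1). Let δ_1,…,δ_{n-1} ∈ (0,1] satisfy δ_1^n δ_2^{n-1}⋯δ_{n-1}^2 = R^{-1}. Let p_k := k^2+k-2 and let m be the largest integer with p_{n+1-m} ≥ p. Then (∏_{j=1}^{m} δ_j^{-1})^{(1/2 - 2/p)p} · (∏_{k=m+1}^{n-1} δ_k^{-1})^{p - p_{n-m}} · ∏_{j=m+1}^{n-2} [ (δ_j^{-1})^{(1/2 - 2/p_{n+1-j}) p_{n+1-j}} · (∏_{k=j+1}^{n-1} δ_k^{-1})^{p_{n+1-j} - p_{n-j}} ] ≤ ∏_{j=1}^{n-1} δ_j^{-2n-2j+6}. -/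
/-!
Write `δ_j⁻¹ = exp t_j` with `t_j = log δ_j⁻¹ ≥ 0`; both sides become exponentials of linear
forms in the `t_j`, so it suffices to compare the coefficients of each `t_k`. Since the increments
`p_{n+1-j} - p_{n-j}` telescope, the coefficient of `t_k` on the left is `2n - 4` for `k ≤ m` and
`p - p_{n+1-k}/2 - 2` for `k > m`. The first is at most `2n + 2k - 6` because `k ≥ 1`, the second
because `p_K ≥ 4(K - 1)`, i.e. `(K - 1)(K - 2) ≥ 0`, for `K = n + 1 - k`.
-/

open Finset Real

theorem sum_Icc_nested_telescope (t D Q : ℕ → ℝ) (C : ℝ) {a N : ℕ} (ha : a ≤ N) :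
    (∑ k ∈ Icc (a + 1) N, t k) * (C - Q (a + 1))
      + ∑ j ∈ Icc (a + 1) N, (t j * D j + (∑ k ∈ Icc (j + 1) N, t k) * (Q j - Q (j + 1)))
    = ∑ k ∈ Icc (a + 1) N, t k * (C - Q k + D k) := by
  induction ha using Nat.decreasingInduction with
  | self => simp
  | of_succ a haN ih =>
    rw [Icc_eq_cons_Ioc haN, sum_cons, sum_cons, sum_cons, ← Icc_add_one_left_eq_Ioc, ← ih]
    ring

theorem sum_Icc_nested_telescope_of_top (t D Q : ℕ → ℝ) (C : ℝ) {a N : ℕ} (ha : a ≤ N)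
    (hD : D N = 0) :
    (∑ k ∈ Icc (a + 1) N, t k) * (C - Q (a + 1))
      + ∑ j ∈ Icc (a + 1) (N - 1), (t j * D j + (∑ k ∈ Icc (j + 1) N, t k) * (Q j - Q (j + 1)))
    = ∑ k ∈ Icc (a + 1) N, t k * (C - Q k + D k) := by
  rw [← sum_Icc_nested_telescope t D Q C ha]
  congr 1
  obtain rfl | ha := ha.eq_or_lt
  · simp
  obtain ⟨N, rfl⟩ : ∃ N', N = N' + 1 := ⟨N - 1, by omega⟩
  rw [Nat.add_sub_cancel, sum_Icc_succ_top (by omega)]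
  simp [hD]

theorem four_mul_sub_one_le_sq_add_sub_two (K : ℕ) :
    4 * ((K : ℝ) - 1) ≤ (K : ℝ) ^ 2 + K - 2 := by
  rcases K with _ | _ | K
  · norm_num
  · norm_num
  · push_cast
    nlinarith

theorem lower_exponent_le {n k : ℕ} (hk : 1 ≤ k) (hkn : k < n) :
    (1 / 2 - 2 / (4 * ((n : ℝ) - 1))) * (4 * ((n : ℝ) - 1)) ≤ 2 * (n : ℝ) + 2 * (k : ℝ) - 6 := by
  have hk' : (1 : ℝ) ≤ k := by exact_mod_cast hk
  have hkn' : (k : ℝ) + 1 ≤ n := by exact_mod_cast hkn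
  rw [sub_mul, div_mul_cancel₀ _ (by linarith)]
  linarith

theorem upper_exponent_le {n k : ℕ} (hkn : k < n) (pf : ℕ → ℝ)
    (hpf : ∀ k : ℕ, pf k = (k : ℝ) ^ 2 + (k : ℝ) - 2) :
    4 * ((n : ℝ) - 1) - pf (n + 1 - k) + (1 / 2 - 2 / pf (n + 1 - k)) * pf (n + 1 - k)
      ≤ 2 * (n : ℝ) + 2 * (k : ℝ) - 6 := by
  have hK : ((n + 1 - k : ℕ) : ℝ) = n + 1 - k := by
    rw [Nat.cast_sub hkn.le.step]
    push_cast
    ring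
  have hkn' : (k : ℝ) + 1 ≤ n := by exact_mod_cast hkn
  have hp := four_mul_sub_one_le_sq_add_sub_two (n + 1 - k)
  rw [← hpf, hK] at hp
  rw [sub_mul, div_mul_cancel₀ _ (by linarith)]
  linarith

theorem exponent_sum_le {n m : ℕ} (hn : 1 ≤ n) (hmn : m ≤ n - 1) (t : ℕ → ℝ)
    (ht : ∀ j ∈ Icc 1 (n - 1), 0 ≤ t j) (pf : ℕ → ℝ)
    (hpf : ∀ k : ℕ, pf k = (k : ℝ) ^ 2 + (k : ℝ) - 2) :
    (∑ j ∈ Icc 1 m, t j) * ((1 / 2 - 2 / (4 * ((n : ℝ) - 1))) * (4 * ((n : ℝ) - 1)))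
      + (∑ k ∈ Icc (m + 1) (n - 1), t k) * (4 * ((n : ℝ) - 1) - pf (n - m))
      + ∑ j ∈ Icc (m + 1) (n - 2), (t j * ((1 / 2 - 2 / pf (n + 1 - j)) * pf (n + 1 - j))
          + (∑ k ∈ Icc (j + 1) (n - 1), t k) * (pf (n + 1 - j) - pf (n - j)))
    ≤ ∑ j ∈ Icc 1 (n - 1), t j * (2 * (n : ℝ) + 2 * (j : ℝ) - 6) := by
  have hshift : ∀ j, pf (n - j) = pf (n + 1 - (j + 1)) := by simp
  have htop : (1 / 2 - 2 / pf (n + 1 - (n - 1))) * pf (n + 1 - (n - 1)) = 0 := by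
    rw [show n + 1 - (n - 1) = 2 by omega, hpf]
    norm_num
  have hsplit : ∑ j ∈ Icc 1 (n - 1), t j * (2 * (n : ℝ) + 2 * (j : ℝ) - 6)
      = ∑ j ∈ Icc 1 m, t j * (2 * (n : ℝ) + 2 * (j : ℝ) - 6)
        + ∑ j ∈ Icc (m + 1) (n - 1), t j * (2 * (n : ℝ) + 2 * (j : ℝ) - 6) := by
    simpa only [← Icc_add_one_left_eq_Ioc, zero_add] using
      (sum_Ioc_consecutive (fun j ↦ t j * (2 * (n : ℝ) + 2 * (j : ℝ) - 6)) m.zero_le hmn).symm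
  have hupper := sum_Icc_nested_telescope_of_top t
    (fun j ↦ (1 / 2 - 2 / pf (n + 1 - j)) * pf (n + 1 - j)) (fun j ↦ pf (n + 1 - j))
    (4 * ((n : ℝ) - 1)) hmn htop
  beta_reduce at hupper
  simp_rw [hshift]
  rw [show n - 2 = n - 1 - 1 by omega, add_assoc, hupper, hsplit, sum_mul]
  refine add_le_add (sum_le_sum fun j hj ↦ ?_) (sum_le_sum fun j hj ↦ ?_) <;>
    obtain ⟨hj1, hj2⟩ := mem_Icc.mp hj <;>
    refine mul_le_mul_of_nonneg_left ?_ (ht j (mem_Icc.mpr ⟨by omega, by omega⟩))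
  · exact lower_exponent_le hj1 (by omega)
  · exact upper_exponent_le (by omega) pf hpf

theorem prod_rpow_eq_exp_sum_mul {ι : Type*} {s : Finset ι} {x t : ι → ℝ}
    (h : ∀ i ∈ s, x i = exp (t i)) (e : ℝ) : (∏ i ∈ s, x i) ^ e = exp ((∑ i ∈ s, t i) * e) := by
  rw [prod_congr rfl h, ← exp_sum, ← exp_mul]

theorem stmt_13_general (n m : ℕ) (hn : 2 ≤ n)
    (δ : ℕ → ℝ) (hδ : ∀ i ∈ Finset.Icc 1 (n - 1), 0 < δ i ∧ δ i ≤ 1)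
    (pf : ℕ → ℝ) (hpf : ∀ k : ℕ, pf k = (k : ℝ) ^ 2 + (k : ℝ) - 2)
    (hm1 : 4 * ((n : ℝ) - 1) ≤ pf (n + 1 - m)) :
    (∏ j ∈ Finset.Icc 1 m, (δ j)⁻¹) ^ ((1 / 2 - 2 / (4 * ((n : ℝ) - 1))) * (4 * ((n : ℝ) - 1)))
      * (∏ k ∈ Finset.Icc (m + 1) (n - 1), (δ k)⁻¹) ^ (4 * ((n : ℝ) - 1) - pf (n - m))
      * ∏ j ∈ Finset.Icc (m + 1) (n - 2),
          (((δ j)⁻¹) ^ ((1 / 2 - 2 / pf (n + 1 - j)) * pf (n + 1 - j))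
            * (∏ k ∈ Finset.Icc (j + 1) (n - 1), (δ k)⁻¹) ^ (pf (n + 1 - j) - pf (n - j)))
    ≤ ∏ j ∈ Finset.Icc 1 (n - 1), ((δ j)⁻¹) ^ (2 * (n : ℝ) + 2 * (j : ℝ) - 6) := by
  have hmn : m ≤ n - 1 := by
    by_contra h
    have hn' : (2 : ℝ) ≤ n := by exact_mod_cast hn
    obtain h2 | h2 : n + 1 - m = 0 ∨ n + 1 - m = 1 := by omega
    all_goals
      rw [h2, hpf] at hm1
      norm_num at hm1
      linarith
  have hexp : ∀ a b, 1 ≤ a → b ≤ n - 1 → ∀ j ∈ Icc a b, (δ j)⁻¹ = exp (log (δ j)⁻¹) :=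
    fun a b ha hb j hj ↦ (exp_log (inv_pos.2 (hδ j (Icc_subset_Icc ha hb hj)).1)).symm
  rw [prod_rpow_eq_exp_sum_mul (hexp 1 m le_rfl hmn),
    prod_rpow_eq_exp_sum_mul (hexp (m + 1) (n - 1) (by omega) le_rfl),
    prod_congr rfl fun j hj ↦ by
      rw [hexp (m + 1) (n - 2) (by omega) (by omega) j hj, ← exp_mul,
        prod_rpow_eq_exp_sum_mul (hexp (j + 1) (n - 1) (by omega) le_rfl), ← exp_add],
    ← exp_sum, ← exp_add, ← exp_add,
    prod_congr rfl fun j hj ↦ by rw [hexp 1 (n - 1) le_rfl le_rfl j hj, ← exp_mul],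
    ← exp_sum, exp_le_exp]
  exact exponent_sum_le (by omega) hmn _
    (fun j hj ↦ log_nonneg (one_le_inv_iff₀.2 (hδ j hj))) pf hpf

/-- The key exponent verification in the proof of the sharp `L^{4(n-1)}` local smoothing
estimate: with `p = 4(n-1)`, `p_k = k^2+k-2`, `m` the largest integer with
`p_{n+1-m} ≥ p`, and `δ_1^n δ_2^{n-1} ⋯ δ_{n-1}^2 = R⁻¹`, `δ_i ∈ (0,1]`, one has
`(∏_{j≤m} δ_j⁻¹)^{(1/2-2/p)p} (∏_{k>m} δ_k⁻¹)^{p-p_{n-m}}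
  ∏_{j=m+1}^{n-2} [(δ_j⁻¹)^{(1/2-2/p_{n+1-j})p_{n+1-j}} (∏_{k>j} δ_k⁻¹)^{p_{n+1-j}-p_{n-j}}]
  ≤ ∏_{j=1}^{n-1} δ_j^{-2n-2j+6}`. -/
theorem stmt_13 (n m : ℕ) (hn : 2 ≤ n) (R : ℝ) (hR : 1 ≤ R)
    (δ : ℕ → ℝ) (hδ : ∀ i ∈ Finset.Icc 1 (n - 1), 0 < δ i ∧ δ i ≤ 1)
    (hnorm : ∏ i ∈ Finset.Icc 1 (n - 1), δ i ^ (n + 1 - i) = R⁻¹)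
    (pf : ℕ → ℝ) (hpf : ∀ k : ℕ, pf k = (k : ℝ) ^ 2 + (k : ℝ) - 2)
    (hm1 : 4 * ((n : ℝ) - 1) ≤ pf (n + 1 - m))
    (hm2 : ∀ m' : ℕ, 4 * ((n : ℝ) - 1) ≤ pf (n + 1 - m') → m' ≤ m) :
    (∏ j ∈ Finset.Icc 1 m, (δ j)⁻¹) ^ ((1 / 2 - 2 / (4 * ((n : ℝ) - 1))) * (4 * ((n : ℝ) - 1)))
      * (∏ k ∈ Finset.Icc (m + 1) (n - 1), (δ k)⁻¹) ^ (4 * ((n : ℝ) - 1) - pf (n - m))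
      * ∏ j ∈ Finset.Icc (m + 1) (n - 2),
          (((δ j)⁻¹) ^ ((1 / 2 - 2 / pf (n + 1 - j)) * pf (n + 1 - j))
            * (∏ k ∈ Finset.Icc (j + 1) (n - 1), (δ k)⁻¹) ^ (pf (n + 1 - j) - pf (n - j)))
    ≤ ∏ j ∈ Finset.Icc 1 (n - 1), ((δ j)⁻¹) ^ (2 * (n : ℝ) + 2 * (j : ℝ) - 6) :=
  stmt_13_general n m hn δ hδ pf hpf hm1
end

section
/- Let γ : [0,1] → ℝ^n be a smooth curve with det(γ'(s), γ''(s), …, γ^{(n)}(s)) ≠ 0 for all s ∈ [0,1] (nondegenerate). Define v_1(s) := (γ(s),1)/√(|γ(s)|²+1) ∈ ℝ^{n+1}. Then the vectors v_1(s), v_1'(s), …, v_1^{(n)}(s) are linearly independent in ℝ^{n+1} for every s ∈ [0,1]. -/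
open scoped ContDiff

/-- Leibniz-type lemma: the `k`-th derivative of `f • g` is a combination of
derivatives of `g` with smooth coefficients, the top coefficient being `f`. -/
lemma leibniz_coeffs {F : Type*} [NormedAddCommGroup F] [NormedSpace ℝ F]
    (f : ℝ → ℝ) (g : ℝ → F) (hf : ContDiff ℝ ∞ f) (hg : ContDiff ℝ ∞ g) (k : ℕ) :
    ∃ c : ℕ → ℝ → ℝ, (∀ i, ContDiff ℝ ∞ (c i)) ∧ (∀ t, c k t = f t) ∧
      (∀ i, k < i → ∀ t, c i t = 0) ∧
      ∀ t, iteratedDeriv k (fun x => f x • g x) t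
        = ∑ i ∈ Finset.range (k + 1), c i t • iteratedDeriv i g t := by
  induction k with
  | zero =>
    refine ⟨fun i => if i = 0 then f else 0, ?_, by simp, ?_, by simp⟩
    · intro i; by_cases h : i = 0
      · simpa [h] using hf
      · simp only [if_neg h]; exact contDiff_const
    · intro i hi t; simp only [if_neg (show ¬ i = 0 by omega)]; rfl
  | succ k IH =>
    obtain ⟨c, hc, hck, hc0, hsum⟩ := IH
    have hcdiff : ∀ i, Differentiable ℝ (c i) := fun i => (contDiff_infty_iff_deriv.mp (hc i)).1
    have hcderiv : ∀ i, ContDiff ℝ ∞ (deriv (c i)) :=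
      fun i => (contDiff_infty_iff_deriv.mp (hc i)).2
    have hgdiff : ∀ i, Differentiable ℝ (iteratedDeriv i g) := fun i =>
      hg.differentiable_iteratedDeriv i (by exact_mod_cast WithTop.coe_lt_top _)
    refine ⟨fun i t => deriv (c i) t + (if i = 0 then 0 else c (i - 1) t), ?_, ?_, ?_, ?_⟩
    · intro i
      by_cases h : i = 0
      · simpa [h] using hcderiv 0
      · simpa [h] using (hcderiv i).add (hc (i - 1))
    · intro t
      have h1 : c (k + 1) = fun _ => (0 : ℝ) := funext fun t => hc0 (k + 1) (by omega) t
      simp [h1, hck t]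
    · intro i hi t
      have h1 : c i = fun _ => (0 : ℝ) := funext fun t => hc0 i (by omega) t
      have h2 : c (i - 1) t = 0 := hc0 (i - 1) (by omega) t
      simp [h1, h2, if_neg (by omega : i ≠ 0)]
    · intro t
      have hfun : iteratedDeriv k (fun x => f x • g x)
          = fun t => ∑ i ∈ Finset.range (k + 1), c i t • iteratedDeriv i g t :=
        funext hsum
      rw [iteratedDeriv_succ, hfun]
      have hterm : ∀ i ∈ Finset.range (k + 1), DifferentiableAt ℝ
          (fun t => c i t • iteratedDeriv i g t) t := fun i _ =>
        ((hcdiff i) t).smul ((hgdiff i) t)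
      rw [deriv_fun_sum hterm]
      have hterm2 : ∀ i ∈ Finset.range (k + 1),
          deriv (fun t => c i t • iteratedDeriv i g t) t
            = deriv (c i) t • iteratedDeriv i g t + c i t • iteratedDeriv (i + 1) g t := by
        intro i _
        rw [deriv_fun_smul ((hcdiff i) t) ((hgdiff i) t), ← iteratedDeriv_succ, add_comm]
      rw [Finset.sum_congr rfl hterm2, Finset.sum_add_distrib]
      have e1 : ∑ i ∈ Finset.range (k + 2),
            (deriv (c i) t + (if i = 0 then 0 else c (i - 1) t)) • iteratedDeriv i g t
          = ∑ i ∈ Finset.range (k + 2), deriv (c i) t • iteratedDeriv i g t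
            + ∑ i ∈ Finset.range (k + 2),
                (if i = 0 then (0:ℝ) else c (i - 1) t) • iteratedDeriv i g t := by
        rw [← Finset.sum_add_distrib]
        exact Finset.sum_congr rfl fun i _ => by rw [add_smul]
      rw [e1]
      congr 1
      · have : c (k + 1) = fun _ => (0 : ℝ) := funext fun t => hc0 (k + 1) (by omega) t
        conv_rhs => rw [Finset.sum_range_succ]
        simp [this]
      · conv_rhs => rw [Finset.sum_range_succ']
        simp


/-- If `γ : [0,1] → ℝ^n` is smooth and nondegenerate (its first `n` derivatives are
linearly independent at every point), and `v_1(s) = (γ(s),1)/√(|γ(s)|²+1) ∈ ℝ^{n+1}`,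
then `v_1(s), v_1'(s), …, v_1^{(n)}(s)` are linearly independent for every `s ∈ [0,1]`. -/
theorem stmt_16 (n : ℕ) (hn : 1 ≤ n)
    (γ : ℝ → EuclideanSpace ℝ (Fin n)) (hγ : ContDiff ℝ (⊤ : ℕ∞) γ)
    (hnd : ∀ s ∈ Set.Icc (0 : ℝ) 1,
      LinearIndependent ℝ (fun j : Fin n => iteratedDeriv ((j : ℕ) + 1) γ s))
    (Γ : ℝ → EuclideanSpace ℝ (Fin (n + 1)))
    (hΓ : ∀ (s : ℝ) (i : Fin (n + 1)),
      Γ s i = if h : (i : ℕ) < n then γ s ⟨(i : ℕ), h⟩ else 1)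
    (v₁ : ℝ → EuclideanSpace ℝ (Fin (n + 1)))
    (hv₁ : ∀ s : ℝ, v₁ s = (Real.sqrt (‖γ s‖ ^ 2 + 1))⁻¹ • Γ s) :
    ∀ s ∈ Set.Icc (0 : ℝ) 1,
      LinearIndependent ℝ (fun j : Fin (n + 1) => iteratedDeriv (j : ℕ) v₁ s) := by
  have hγ' : ContDiff ℝ ∞ γ := hγ.of_le (by simp)
  have hγd : ∀ m : ℕ, Differentiable ℝ (iteratedDeriv m γ) := fun m =>
    hγ'.differentiable_iteratedDeriv m (by exact_mod_cast WithTop.coe_lt_top _)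
  -- the constant vector and the padding linear map
  set E : EuclideanSpace ℝ (Fin (n + 1)) :=
    WithLp.toLp 2 (fun i => if (i : ℕ) < n then 0 else 1 : Fin (n + 1) → ℝ) with hE
  let L0 : EuclideanSpace ℝ (Fin n) →ₗ[ℝ] EuclideanSpace ℝ (Fin (n + 1)) :=
    { toFun := fun x => WithLp.toLp 2 (fun i => if h : (i : ℕ) < n then x ⟨(i : ℕ), h⟩ else 0 : Fin (n+1) → ℝ)
      map_add' := by
        intro x y; ext i; by_cases h : (i : ℕ) < n <;> simp [h]
      map_smul' := by
        intro r x; ext i; by_cases h : (i : ℕ) < n <;> simp [h] }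
  let L : EuclideanSpace ℝ (Fin n) →L[ℝ] EuclideanSpace ℝ (Fin (n + 1)) :=
    LinearMap.toContinuousLinearMap L0
  have hL : ∀ x (i : Fin (n+1)), L x i = if h : (i : ℕ) < n then x ⟨(i : ℕ), h⟩ else 0 :=
    fun x i => rfl
  have hΓeq : Γ = fun t => L (γ t) + E := by
    funext t; ext i
    rw [hΓ]
    by_cases h : (i : ℕ) < n <;> simp [hL, hE, h]
  have hΓc : ContDiff ℝ ∞ Γ := by
    rw [hΓeq]; exact (L.contDiff.comp hγ').add contDiff_const
  have hLinj : ∀ x, L x = 0 → x = 0 := by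
    intro x hx
    ext i
    have := congrArg (fun v : EuclideanSpace ℝ (Fin (n + 1)) => v ⟨(i : ℕ), by omega⟩) hx
    simpa [hL] using this
  -- iterated derivatives of Γ
  have hΓd : ∀ k : ℕ, iteratedDeriv (k + 1) Γ = fun t => L (iteratedDeriv (k + 1) γ t) := by
    intro k
    induction k with
    | zero =>
      funext t
      have h1 : HasDerivAt (fun u => L (γ u) + E) (L (deriv γ t)) t :=
        (L.hasFDerivAt.comp_hasDerivAt t ((hγ.differentiable (by simp)) t).hasDerivAt).add_const E
      rw [iteratedDeriv_one, iteratedDeriv_one, hΓeq]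
      exact h1.deriv
    | succ k IH =>
      funext t
      rw [iteratedDeriv_succ, IH]
      have h1 : HasDerivAt (fun u => L (iteratedDeriv (k + 1) γ u))
          (L (deriv (iteratedDeriv (k + 1) γ) t)) t :=
        L.hasFDerivAt.comp_hasDerivAt t ((hγd (k + 1)) t).hasDerivAt
      rw [h1.deriv]
      conv_rhs => rw [iteratedDeriv_succ]
  -- the scalar factor
  set f : ℝ → ℝ := fun t => (Real.sqrt (‖γ t‖ ^ 2 + 1))⁻¹ with hfdef
  have hsq : ∀ t : ℝ, ‖γ t‖ ^ 2 + 1 ≠ 0 := fun t => by positivity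
  have hsqrt_ne : ∀ t : ℝ, Real.sqrt (‖γ t‖ ^ 2 + 1) ≠ 0 := fun t =>
    Real.sqrt_ne_zero'.mpr (by positivity)
  have hfc : ContDiff ℝ ∞ f :=
    ((((hγ'.norm_sq (𝕜 := ℝ))).add contDiff_const).sqrt hsq).inv hsqrt_ne
  have hfne : ∀ t, f t ≠ 0 := fun t => inv_ne_zero (hsqrt_ne t)
  have hveq : v₁ = fun t => f t • Γ t := funext hv₁
  intro s hs
  -- coefficients from the Leibniz lemma
  choose c hcc hcd hcz hcs using fun k : ℕ => leibniz_coeffs f Γ hfc hΓc k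
  -- linear independence of the derivatives of Γ
  have hGind : LinearIndependent ℝ (fun i : Fin (n + 1) => iteratedDeriv (i : ℕ) Γ s) := by
    rw [Fintype.linearIndependent_iff]
    intro g hg
    have hlast : ∀ i : Fin (n + 1),
        (EuclideanSpace.proj (⟨n, by omega⟩ : Fin (n + 1)))
          (iteratedDeriv (i : ℕ) Γ s) = if i = 0 then 1 else 0 := by
      intro i
      rcases i with ⟨iv, hiv⟩
      match iv with
      | 0 => simp [hΓ]
      | (m + 1) =>
        rw [show ((⟨m+1, hiv⟩ : Fin (n+1)) : ℕ) = m + 1 from rfl, hΓd m]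
        simp [hL, Fin.ext_iff]
    have h0 : g 0 = 0 := by
      have := congrArg (EuclideanSpace.proj (⟨n, by omega⟩ : Fin (n + 1))) hg
      rw [map_sum, map_zero] at this
      simp only [map_smul, hlast, smul_eq_mul] at this
      rw [Fin.sum_univ_succ] at this
      simpa [Fin.succ_ne_zero] using this
    have h2 : ∑ i : Fin n, g i.succ • iteratedDeriv ((i : ℕ) + 1) γ s = 0 := by
      apply hLinj
      rw [map_sum]
      have h3 : ∑ i : Fin n, L (g i.succ • iteratedDeriv ((i : ℕ) + 1) γ s)
          = ∑ i : Fin n, g i.succ • iteratedDeriv ((i : ℕ) + 1) Γ s := by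
        refine Finset.sum_congr rfl fun i _ => ?_
        rw [map_smul, hΓd (i : ℕ)]
      rw [h3]
      have h4 := hg
      rw [Fin.sum_univ_succ, h0, zero_smul, zero_add] at h4
      rw [← h4]
      refine Finset.sum_congr rfl fun i _ => ?_
      congr 1
    have h5 := Fintype.linearIndependent_iff.mp (hnd s hs) (fun i => g i.succ) h2
    intro j
    rcases Fin.eq_zero_or_eq_succ j with rfl | ⟨i, rfl⟩
    · exact h0
    · exact h5 i
  -- the triangular matrix of coefficients
  set A : Matrix (Fin (n + 1)) (Fin (n + 1)) ℝ :=
    Matrix.of fun k i : Fin (n + 1) => c (k : ℕ) (i : ℕ) s with hA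
  have hAdiag : ∀ k : Fin (n + 1), A k k = f s := fun k => hcd (k : ℕ) s
  have hAzero : ∀ k i : Fin (n + 1), (k : ℕ) < (i : ℕ) → A k i = 0 :=
    fun k i h => hcz (k : ℕ) (i : ℕ) h s
  have hAdet : A.det ≠ 0 := by
    have ht : A.transpose.BlockTriangular id := fun i j hij => hAzero j i hij
    rw [← Matrix.det_transpose, Matrix.det_of_upperTriangular ht]
    have : ∏ i : Fin (n + 1), A.transpose i i = ∏ _i : Fin (n + 1), f s :=
      Finset.prod_congr rfl fun i _ => hAdiag i
    rw [this, Finset.prod_const]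
    exact pow_ne_zero _ (hfne s)
  -- expansion of the derivatives of v₁
  have hexp : ∀ k : Fin (n + 1), iteratedDeriv (k : ℕ) v₁ s
      = ∑ i : Fin (n + 1), A k i • iteratedDeriv (i : ℕ) Γ s := by
    intro k
    rw [hveq, hcs (k : ℕ) s]
    have hsub : Finset.range ((k : ℕ) + 1) ⊆ Finset.range (n + 1) :=
      Finset.range_subset_range.mpr (by omega)
    rw [Finset.sum_subset hsub (fun i hi hni => by
      rw [hcz (k : ℕ) i (by simp only [Finset.mem_range] at hi hni ⊢; omega) s, zero_smul])]
    exact (Fin.sum_univ_eq_sum_range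
      (fun i : ℕ => c (k : ℕ) i s • iteratedDeriv i Γ s) (n + 1)).symm
  -- conclude
  rw [Fintype.linearIndependent_iff]
  intro g hg
  have hg2 : ∑ i : Fin (n + 1), (∑ k : Fin (n + 1), g k * A k i) • iteratedDeriv (i : ℕ) Γ s
      = 0 := by
    have h6 : ∑ k : Fin (n + 1), g k • iteratedDeriv (k : ℕ) v₁ s
        = ∑ i : Fin (n + 1), (∑ k : Fin (n + 1), g k * A k i) • iteratedDeriv (i : ℕ) Γ s := by
      simp_rw [hexp, Finset.smul_sum, smul_smul]
      rw [Finset.sum_comm]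
      simp_rw [Finset.sum_smul]
    rw [← h6]
    exact hg
  have hcoef : ∀ i, ∑ k : Fin (n + 1), g k * A k i = 0 :=
    Fintype.linearIndependent_iff.mp hGind _ hg2
  have hvm : Matrix.vecMul g A = 0 := by
    funext i
    simpa [Matrix.vecMul, dotProduct] using hcoef i
  have hU : IsUnit A.det := isUnit_iff_ne_zero.mpr hAdet
  have hg0 : g = 0 := by
    have h7 := congrArg (fun w => Matrix.vecMul w A⁻¹) hvm
    simpa [Matrix.vecMul_vecMul, Matrix.mul_nonsing_inv A hU] using h7
  intro j
  exact congrFun hg0 j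
end
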